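/- arXiv:1812.03475 — 2 statements merged into one kernel-verified Lean document; each statement's English description precedes it below -/
import Mathlib

section
/- Let c_k : Θ → [0,∞), k ≥ 0, with c_0(θ) ≥ σ_min² > 0 and sup_{θ∈Θ} c_k(θ) ≤ C ρ^k for constants C > 0, ρ ∈ (0,1), σ_min > 0. Define σ(y,θ)² := c_0(θ) + ∑_{k≥1} c_k(θ) y_k for nonnegative sequences y. Then for every p ∈ (0,1] there exist C̃ > 0 and ρ̃ ∈ (0,1) such that for all θ, θ' ∈ Θ satisfying c_k(θ') ≤ (1+δ)^k c_k(θ) for all k (with (1+δ)ρ^p < 1), one has σ(y,θ')²/σ(y,θ)² ≤ C̃ (1 + ∑_{k≥1} ρ̃^k y_k^p). -/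
lemma min_le_rpow_aux (x p : ℝ) (hx : 0 ≤ x) (hp0 : 0 < p) (hp1 : p ≤ 1) :
    min x 1 ≤ x ^ p := by
  rcases le_or_gt x 1 with h | h
  · rw [min_eq_left h]
    rcases eq_or_lt_of_le hx with h0 | h0
    · rw [← h0, Real.zero_rpow hp0.ne']
    · calc x = x ^ (1:ℝ) := (Real.rpow_one x).symm
        _ ≤ x ^ p := Real.rpow_le_rpow_of_exponent_ge h0 h hp1
  · rw [min_eq_right h.le]
    calc (1:ℝ) = (1:ℝ) ^ p := (Real.one_rpow p).symm
      _ ≤ x ^ p := Real.rpow_le_rpow zero_le_one h.le hp0.le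

/-- Ratio bound for ARCH(∞)-type volatilities at nearby parameters. -/
theorem stmt9 {Θ : Type*} (c : ℕ → Θ → ℝ) (C ρ σmin : ℝ)
    (hC : 0 < C) (hρ0 : 0 < ρ) (hρ1 : ρ < 1) (hσ : 0 < σmin)
    (hcnn : ∀ k θ, 0 ≤ c k θ)
    (hc0 : ∀ θ, σmin ^ 2 ≤ c 0 θ)
    (hdecay : ∀ k θ, c k θ ≤ C * ρ ^ k)
    (p : ℝ) (hp0 : 0 < p) (hp1 : p ≤ 1)
    (δ : ℝ) (hδ : 0 < δ) (hδρ : (1 + δ) * ρ ^ p < 1) :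
    ∃ Ct > 0, ∃ ρt ∈ Set.Ioo (0 : ℝ) 1, ∀ (θ θ' : Θ) (y : ℕ → ℝ),
      (∀ k, 0 ≤ y k) →
      Summable (fun k : ℕ => c (k + 1) θ * y (k + 1)) →
      Summable (fun k : ℕ => c (k + 1) θ' * y (k + 1)) →
      Summable (fun k : ℕ => ρt ^ (k + 1) * y (k + 1) ^ p) →
      (∀ k, c k θ' ≤ (1 + δ) ^ k * c k θ) →
      (c 0 θ' + ∑' k : ℕ, c (k + 1) θ' * y (k + 1)) /
          (c 0 θ + ∑' k : ℕ, c (k + 1) θ * y (k + 1)) ≤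
        Ct * (1 + ∑' k : ℕ, ρt ^ (k + 1) * y (k + 1) ^ p) := by
  have hσ2 : (0:ℝ) < σmin ^ 2 := by positivity
  have hρp : 0 < ρ ^ p := Real.rpow_pos_of_pos hρ0 p
  set K := (C / σmin ^ 2) ^ p with hK
  have hKpos : 0 < K := Real.rpow_pos_of_pos (by positivity) p
  refine ⟨max 1 K, lt_of_lt_of_le one_pos (le_max_left _ _),
    (1 + δ) * ρ ^ p, ⟨by positivity, hδρ⟩, ?_⟩
  intro θ θ' y hy hS hS' hSρ hclose
  set ρt := (1 + δ) * ρ ^ p with hρt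
  have hρtpos : 0 < ρt := by positivity
  have hT0 : 0 ≤ ∑' k : ℕ, c (k+1) θ * y (k+1) :=
    tsum_nonneg fun k => mul_nonneg (hcnn _ _) (hy _)
  set D := c 0 θ + ∑' k : ℕ, c (k+1) θ * y (k+1) with hD
  have hDσ : σmin ^ 2 ≤ D := le_add_of_le_of_nonneg (hc0 θ) hT0
  have hDpos : 0 < D := lt_of_lt_of_le hσ2 hDσ
  have hc0D : c 0 θ ≤ D := le_add_of_nonneg_right hT0
  have hc0pos : 0 < c 0 θ := lt_of_lt_of_le hσ2 (hc0 θ)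
  -- per-term bound
  have hterm : ∀ k : ℕ, c (k+1) θ' * y (k+1) / D ≤ K * (ρt ^ (k+1) * y (k+1) ^ p) := by
    intro k
    set a := c (k+1) θ * y (k+1) with ha
    have ha0 : 0 ≤ a := mul_nonneg (hcnn _ _) (hy _)
    have haT : a ≤ ∑' j : ℕ, c (j+1) θ * y (j+1) :=
      Summable.le_tsum hS k (fun j _ => mul_nonneg (hcnn _ _) (hy _))
    have h1 : c (k+1) θ' * y (k+1) / D ≤ (1+δ)^(k+1) * (a / D) := by
      rw [← mul_div_assoc]
      have hnum : c (k+1) θ' * y (k+1) ≤ (1+δ)^(k+1) * a := by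
        rw [ha, ← mul_assoc]
        exact mul_le_mul_of_nonneg_right (hclose (k+1)) (hy _)
      exact (div_le_div_iff_of_pos_right hDpos).mpr hnum
    have h2 : a / D ≤ (a / c 0 θ) ^ p := by
      refine le_trans ?_ (min_le_rpow_aux _ p (div_nonneg ha0 hc0pos.le) hp0 hp1)
      refine le_min ?_ ?_
      · gcongr
      · rw [div_le_one hDpos]; linarith
    have h3 : (a / c 0 θ) ^ p ≤ K * ((ρ ^ p) ^ (k+1) * y (k+1) ^ p) := by
      have hle : a / c 0 θ ≤ (C / σmin ^ 2) * (ρ ^ (k+1) * y (k+1)) := by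
        have : a ≤ C * ρ ^ (k+1) * y (k+1) :=
          mul_le_mul_of_nonneg_right (hdecay (k+1) θ) (hy _)
        calc a / c 0 θ ≤ a / σmin ^ 2 := by gcongr; exact hc0 θ
          _ ≤ (C * ρ ^ (k+1) * y (k+1)) / σmin ^ 2 := by gcongr
          _ = (C / σmin ^ 2) * (ρ ^ (k+1) * y (k+1)) := by ring
      calc (a / c 0 θ) ^ p ≤ ((C / σmin ^ 2) * (ρ ^ (k+1) * y (k+1))) ^ p :=
            Real.rpow_le_rpow (div_nonneg ha0 hc0pos.le) hle hp0.le
        _ = K * ((ρ ^ (k+1)) ^ p * y (k+1) ^ p) := by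
            rw [Real.mul_rpow (by positivity) (mul_nonneg (by positivity) (hy _)),
              Real.mul_rpow (by positivity) (hy _)]
        _ = K * ((ρ ^ p) ^ (k+1) * y (k+1) ^ p) := by
            rw [← Real.rpow_natCast ρ (k+1), ← Real.rpow_natCast (ρ ^ p) (k+1),
              ← Real.rpow_mul hρ0.le, ← Real.rpow_mul hρ0.le,
              mul_comm ((k+1:ℕ):ℝ) p]
    calc c (k+1) θ' * y (k+1) / D ≤ (1+δ)^(k+1) * (a / D) := h1
      _ ≤ (1+δ)^(k+1) * (K * ((ρ ^ p) ^ (k+1) * y (k+1) ^ p)) := by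
          gcongr
          exact h2.trans h3
      _ = K * (ρt ^ (k+1) * y (k+1) ^ p) := by rw [hρt, mul_pow]; ring
  -- sum up
  have hTp0 : 0 ≤ ∑' k : ℕ, ρt ^ (k+1) * y (k+1) ^ p :=
    tsum_nonneg fun k => mul_nonneg (by positivity) (Real.rpow_nonneg (hy _) p)
  have hsum : (∑' k : ℕ, c (k+1) θ' * y (k+1)) / D
      ≤ K * ∑' k : ℕ, ρt ^ (k+1) * y (k+1) ^ p := by
    rw [← tsum_div_const, ← tsum_mul_left]
    exact Summable.tsum_le_tsum hterm (hS'.div_const D) (hSρ.mul_left K)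
  have hc0' : c 0 θ' / D ≤ 1 := by
    rw [div_le_one hDpos]
    have := hclose 0
    simp only [pow_zero, one_mul] at this
    linarith
  have hKmax : K ≤ max 1 K := le_max_right _ _
  have h1max : (1:ℝ) ≤ max 1 K := le_max_left _ _
  calc (c 0 θ' + ∑' k : ℕ, c (k+1) θ' * y (k+1)) / D
      = c 0 θ' / D + (∑' k : ℕ, c (k+1) θ' * y (k+1)) / D := add_div _ _ _
    _ ≤ 1 + K * ∑' k : ℕ, ρt ^ (k+1) * y (k+1) ^ p := add_le_add hc0' hsum
    _ ≤ max 1 K * (1 + ∑' k : ℕ, ρt ^ (k+1) * y (k+1) ^ p) := by nlinarith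
end

section
/- Let (W_i)_{i∈ℤ} be a stationary ergodic sequence of real random variables with E[max(−W_1, 0)] < ∞ (so that E W_1 ∈ ℝ ∪ {+∞}). Fix κ > 0 and let R = {(τ_1,τ_2) ∈ [0,1]²: τ_1 < τ_2, τ_2 − τ_1 ≥ κ}. Then lim inf_{n→∞} inf_{(τ_1,τ_2)∈R} (1/(n(τ_2−τ_1))) ∑_{i=⌊nτ_1⌋+1}^{⌊nτ_2⌋} W_i ≥ E W_1 almost surely. -/
/-!
Garsia's argument gives the maximal ergodic inequality `∫_{∃ n, S_n h > 0} h ≥ 0` for the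
Birkhoff sums `S_n h`. For ergodic `T` the set where `S_n (g - c)` is bounded above is
`T`-invariant, hence null or conull, and the maximal inequality rules out "null" when
`∫ g < c`; this gives Birkhoff's theorem `S_n g / n → ∫ g` a.e. for integrable `g`.

Since `S_n / n → m` forces `max_{k ≤ n} |S_k - m k| = o(n)`, the window sum
`S_{⌊nτ₂⌋} - S_{⌊nτ₁⌋} = m n (τ₂ - τ₁) + o(n)` uniformly in the windows, and the error is
negligible because `τ₂ - τ₁ ≥ κ`. When `E W₁` may be `+∞` it suffices to bound the averages of
some integrable `g ≤ f` whose mean is as close to `E W₁` as we like.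
-/

open MeasureTheory Filter Finset Topology
open scoped ENNReal

section BirkhoffSum

variable {Ω : Type*}

theorem sum_Ioc_iterate_eq_birkhoffSum_sub {M : Type*} [AddCommGroup M] (T : Ω → Ω) (g : Ω → M)
    {a b : ℕ} (hab : a ≤ b) (ω : Ω) :
    ∑ i ∈ Ioc a b, g (T^[i] ω) = birkhoffSum T g b (T ω) - birkhoffSum T g a (T ω) := by
  induction b, hab using Nat.le_induction with
  | base => simp
  | succ b hab ih =>
    rw [sum_Ioc_succ_top hab, ih, birkhoffSum_succ, Function.iterate_succ_apply]
    abel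

theorem bddAbove_range_birkhoffSum_apply_iff (T : Ω → Ω) (h : Ω → ℝ) (ω : Ω) :
    BddAbove (Set.range fun n => birkhoffSum T h n (T ω)) ↔
      BddAbove (Set.range fun n => birkhoffSum T h n ω) := by
  constructor
  · rintro ⟨C, hC⟩
    refine ⟨max 0 (h ω + C), ?_⟩
    rintro _ ⟨n | n, rfl⟩
    · simp
    · dsimp only
      rw [birkhoffSum_succ']
      exact le_max_of_le_right (add_le_add_right (hC ⟨n, rfl⟩) _)
  · rintro ⟨C, hC⟩
    refine ⟨C - h ω, ?_⟩
    rintro _ ⟨n, rfl⟩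
    have : birkhoffSum T h (n + 1) ω ≤ C := hC ⟨n + 1, rfl⟩
    rw [birkhoffSum_succ'] at this
    linarith

theorem birkhoffSum_sub_const (T : Ω → Ω) (g : Ω → ℝ) (c : ℝ) (n : ℕ) (ω : Ω) :
    birkhoffSum T (fun x => g x - c) n ω = birkhoffSum T g n ω - n * c := by
  simp [birkhoffSum, sum_sub_distrib, mul_comm]

end BirkhoffSum

section BirkhoffMax

variable {Ω : Type*} {T : Ω → Ω} {h : Ω → ℝ}

noncomputable def birkhoffMax (T : Ω → Ω) (h : Ω → ℝ) (N : ℕ) : Ω → ℝ :=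
  (range (N + 1)).sup' nonempty_range_add_one fun k => birkhoffSum T h k

theorem birkhoffMax_apply (N : ℕ) (ω : Ω) :
    birkhoffMax T h N ω =
      (range (N + 1)).sup' nonempty_range_add_one fun k => birkhoffSum T h k ω :=
  Finset.sup'_apply _ _ _

theorem birkhoffSum_le_birkhoffMax {k N : ℕ} (hk : k ≤ N) (ω : Ω) :
    birkhoffSum T h k ω ≤ birkhoffMax T h N ω := by
  rw [birkhoffMax_apply]
  exact le_sup' (fun k => birkhoffSum T h k ω) (mem_range.2 (Nat.lt_succ_of_le hk))

theorem birkhoffMax_nonneg (N : ℕ) (ω : Ω) : 0 ≤ birkhoffMax T h N ω :=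
  (birkhoffSum_zero T h ω).symm.le.trans (birkhoffSum_le_birkhoffMax N.zero_le ω)

theorem monotone_birkhoffMax (ω : Ω) : Monotone fun N => birkhoffMax T h N ω := by
  intro M N hMN
  simp only [birkhoffMax_apply]
  exact sup'_mono _ (range_subset_range.2 (by omega)) _

theorem birkhoffMax_le_max_zero_add (N : ℕ) (ω : Ω) :
    birkhoffMax T h N ω ≤ max 0 (h ω + birkhoffMax T h N (T ω)) := by
  rw [birkhoffMax_apply]
  refine sup'_le _ _ fun k hk => ?_
  cases k with
  | zero => exact le_max_of_le_left (birkhoffSum_zero T h ω).le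
  | succ k =>
    rw [birkhoffSum_succ']
    exact le_max_of_le_right (add_le_add_right
      (birkhoffSum_le_birkhoffMax
      ((Nat.le_succ k).trans (Nat.lt_succ_iff.1 (mem_range.1 hk))) _) _)

theorem iUnion_birkhoffMax_pos :
    ⋃ N, {ω | 0 < birkhoffMax T h N ω} = {ω | ∃ n, 0 < birkhoffSum T h n ω} := by
  ext ω
  simp only [Set.mem_iUnion, Set.mem_ofPred_eq, birkhoffMax_apply, lt_sup'_iff, mem_range]
  exact ⟨fun ⟨_, k, _, hk⟩ => ⟨k, hk⟩, fun ⟨k, hk⟩ => ⟨k, k, k.lt_succ_self, hk⟩⟩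

end BirkhoffMax

section MaximalErgodic

variable {Ω : Type*} [MeasurableSpace Ω] {μ : Measure Ω} {T : Ω → Ω} {h : Ω → ℝ}

theorem measurable_birkhoffSum (hT : Measurable T) (hh : Measurable h) (n : ℕ) :
    Measurable (birkhoffSum T h n) :=
  Finset.measurable_sum _ fun i _ => hh.comp (hT.iterate i)

theorem integrable_birkhoffSum (hT : MeasurePreserving T μ μ) (hh : Integrable h μ) (n : ℕ) :
    Integrable (birkhoffSum T h n) μ :=
  integrable_finsetSum _ fun i _ => (hT.iterate i).integrable_comp_of_integrable hh

theorem measurable_birkhoffMax (hT : Measurable T) (hh : Measurable h) (N : ℕ) :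
    Measurable (birkhoffMax T h N) :=
  Finset.measurable_range_sup' fun k _ => measurable_birkhoffSum hT hh k

theorem integrable_birkhoffMax (hT : MeasurePreserving T μ μ) (hh : Integrable h μ) (N : ℕ) :
    Integrable (birkhoffMax T h N) μ :=
  sup'_induction _ _ (p := fun F => Integrable F μ) (fun _ hf _ hg => hf.sup hg)
    fun k _ => integrable_birkhoffSum hT hh k

theorem setIntegral_birkhoffMax_pos_nonneg (hT : MeasurePreserving T μ μ) (hh : Integrable h μ)
    (hhm : Measurable h) (N : ℕ) : 0 ≤ ∫ ω in {ω | 0 < birkhoffMax T h N ω}, h ω ∂μ := by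
  set F := birkhoffMax T h N
  set E := {ω | 0 < F ω}
  have hFm : Measurable F := measurable_birkhoffMax hT.measurable hhm N
  have hF : Integrable F μ := integrable_birkhoffMax hT hh N
  have hFT : Integrable (fun ω => F (T ω)) μ := hT.integrable_comp_of_integrable hF
  have hE : MeasurableSet E := measurableSet_lt measurable_const hFm
  have hF_on_E : ∀ ω ∈ E, F ω - F (T ω) ≤ h ω := fun ω hω => by
    rcases le_max_iff.1 (birkhoffMax_le_max_zero_add N ω) with hzero | hadd
    · exact absurd hzero (not_le.2 hω)
    · linarith
  have hF_off_E : ∀ ω ∉ E, F ω = 0 := fun ω hω =>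
    le_antisymm (not_lt.1 hω) (birkhoffMax_nonneg N ω)
  calc 0 = ∫ ω, F ω ∂μ - ∫ ω, F (T ω) ∂μ := by
        rw [← integral_map hT.measurable.aemeasurable hFm.aestronglyMeasurable, hT.map_eq,
          sub_self]
    _ ≤ ∫ ω in E, F ω ∂μ - ∫ ω in E, F (T ω) ∂μ := by
        rw [setIntegral_eq_integral_of_forall_compl_eq_zero hF_off_E]
        gcongr
        · exact Eventually.of_forall fun ω => birkhoffMax_nonneg N _
        · exact Measure.restrict_le_self
    _ = ∫ ω in E, (F ω - F (T ω)) ∂μ := (integral_sub hF.integrableOn hFT.integrableOn).symm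
    _ ≤ ∫ ω in E, h ω ∂μ := setIntegral_mono_on (hF.sub hFT).integrableOn hh.integrableOn hE hF_on_E

theorem setIntegral_birkhoffSum_pos_nonneg (hT : MeasurePreserving T μ μ) (hh : Integrable h μ)
    (hhm : Measurable h) : 0 ≤ ∫ ω in {ω | ∃ n, 0 < birkhoffSum T h n ω}, h ω ∂μ := by
  rw [← iUnion_birkhoffMax_pos]
  refine ge_of_tendsto (tendsto_setIntegral_of_monotone
    (fun N => measurableSet_lt measurable_const (measurable_birkhoffMax hT.measurable hhm N))
    (fun M N hMN ω hω => lt_of_lt_of_le hω (monotone_birkhoffMax ω hMN)) hh.integrableOn)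
    (Eventually.of_forall (setIntegral_birkhoffMax_pos_nonneg hT hh hhm))

theorem Ergodic.ae_bddAbove_range_birkhoffSum (hT : Ergodic T μ) (hh : Integrable h μ)
    (hhm : Measurable h) (hneg : ∫ ω, h ω ∂μ < 0) :
    ∀ᵐ ω ∂μ, BddAbove (Set.range fun n => birkhoffSum T h n ω) := by
  set A := {ω | BddAbove (Set.range fun n => birkhoffSum T h n ω)}
  have hA : MeasurableSet A :=
    measurableSet_bddAbove_range (measurable_birkhoffSum hT.measurable hhm)
  have hTA : T ⁻¹' A = A := Set.ext (bddAbove_range_birkhoffSum_apply_iff T h)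
  refine eventuallyEq_univ.1 <|
    (hT.ae_empty_or_univ hA hTA).resolve_left fun hA0 => hneg.not_ge ?_
  have hpos : ∀ᵐ ω ∂μ, ω ∈ {ω | ∃ n, 0 < birkhoffSum T h n ω} :=
    (eventuallyEq_empty.1 hA0).mono fun ω hω => by
      obtain ⟨_, ⟨n, rfl⟩, hn⟩ := not_bddAbove_iff.1 hω 0
      exact ⟨n, hn⟩
  simpa [Measure.restrict_eq_self_of_ae_mem hpos] using
    setIntegral_birkhoffSum_pos_nonneg hT.toMeasurePreserving hh hhm

end MaximalErgodic

section Birkhoff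

variable {Ω : Type*} [MeasurableSpace Ω] {μ : Measure Ω} [IsProbabilityMeasure μ] {T : Ω → Ω}
  {g : Ω → ℝ}

theorem Ergodic.ae_eventually_birkhoffSum_le (hT : Ergodic T μ) (hg : Integrable g μ)
    (hgm : Measurable g) {c : ℝ} (hc : ∫ ω, g ω ∂μ < c) :
    ∀ᵐ ω ∂μ, ∀ᶠ n : ℕ in atTop, birkhoffSum T g n ω ≤ c * n := by
  obtain ⟨c', hgc', hc'c⟩ := exists_between hc
  have hbdd := hT.ae_bddAbove_range_birkhoffSum (h := fun ω => g ω - c')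
    (hg.sub (integrable_const c'))
    (hgm.sub measurable_const) (by rw [integral_sub hg (integrable_const c')]; simpa)
  filter_upwards [hbdd] with ω ⟨C, hC⟩
  filter_upwards [tendsto_natCast_atTop_atTop.eventually_ge_atTop (C / (c - c'))] with n hn
  have hS : birkhoffSum T (fun x => g x - c') n ω ≤ C := hC ⟨n, rfl⟩
  rw [birkhoffSum_sub_const] at hS
  rw [div_le_iff₀ (sub_pos.2 hc'c)] at hn
  linarith

theorem Ergodic.ae_eventually_birkhoffAverage_lt (hT : Ergodic T μ) (hg : Integrable g μ)
    (hgm : Measurable g) :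
    ∀ᵐ ω ∂μ, ∀ a, ∫ ω, g ω ∂μ < a → ∀ᶠ n : ℕ in atTop, birkhoffAverage ℝ T g n ω < a := by
  have hle := ae_all_iff.2 fun k : ℕ => hT.ae_eventually_birkhoffSum_le hg hgm
    (c := ∫ ω, g ω ∂μ + 1 / (k + 1)) (by simp only [lt_add_iff_pos_right]; positivity)
  filter_upwards [hle] with ω hω a ha
  obtain ⟨k, hk⟩ := exists_nat_one_div_lt (sub_pos.2 ha)
  filter_upwards [hω k, eventually_gt_atTop 0] with n hn hn0
  rw [birkhoffAverage, smul_eq_mul, inv_mul_lt_iff₀ (Nat.cast_pos.2 hn0)]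
  calc birkhoffSum T g n ω ≤ (∫ ω, g ω ∂μ + 1 / (k + 1)) * n := hn
    _ < n * a := by rw [mul_comm]; gcongr; linarith

theorem Ergodic.ae_tendsto_birkhoffAverage (hT : Ergodic T μ) (hg : Integrable g μ)
    (hgm : Measurable g) :
    ∀ᵐ ω ∂μ, Tendsto (birkhoffAverage ℝ T g · ω) atTop (𝓝 (∫ ω, g ω ∂μ)) := by
  filter_upwards [hT.ae_eventually_birkhoffAverage_lt hg hgm,
    hT.ae_eventually_birkhoffAverage_lt hg.neg hgm.neg] with ω hup hlow
  refine tendsto_order.2 ⟨fun a ha => ?_, hup⟩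
  filter_upwards [hlow (-a) (by simp only [Pi.neg_apply, integral_neg]; linarith)] with n hn
  simp only [birkhoffAverage_neg, Pi.neg_apply] at hn
  linarith

end Birkhoff

section SublinearErrors

variable {s : ℕ → ℝ} {m : ℝ}

theorem eventually_forall_abs_sub_mul_le_of_tendsto_div
    (hs : Tendsto (fun n => s n / n) atTop (𝓝 m)) {ε : ℝ} (hε : 0 < ε) :
    ∀ᶠ n : ℕ in atTop, ∀ k ≤ n, |s k - m * k| ≤ ε * n := by
  obtain ⟨K, hK⟩ := Metric.tendsto_atTop.1 hs ε hε
  set C := ∑ k ∈ range (K + 1), |s k - m * k|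
  filter_upwards [eventually_ge_atTop K,
    tendsto_natCast_atTop_atTop.eventually_ge_atTop (C / ε)] with n hKn hCn k hkn
  rw [div_le_iff₀ hε] at hCn
  rcases le_or_gt k K with hkK | hKk
  · calc |s k - m * k| ≤ C :=
          single_le_sum (f := fun k => |s k - m * k|) (fun _ _ => abs_nonneg _)
            (mem_range.2 (Nat.lt_succ_of_le hkK))
      _ ≤ ε * n := by linarith
  · have hk : (0 : ℝ) < k := by exact_mod_cast (Nat.zero_le K).trans_lt hKk
    have hdist := hK k hKk.le
    rw [Real.dist_eq] at hdist
    calc |s k - m * k| = |s k / k - m| * k := by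
          rw [← abs_of_pos hk, ← abs_mul, abs_of_pos hk, sub_mul, div_mul_cancel₀ _ hk.ne']
      _ ≤ ε * k := by gcongr
      _ ≤ ε * n := by gcongr

theorem eventually_mul_le_sub_floor_of_tendsto_div
    (hs : Tendsto (fun n => s n / n) atTop (𝓝 m)) {q κ : ℝ} (hq : q < m) (hκ : 0 < κ) :
    ∀ᶠ n : ℕ in atTop, ∀ τ1 τ2 : ℝ, 0 ≤ τ1 → τ2 ≤ 1 → κ ≤ τ2 - τ1 →
      q * (n * (τ2 - τ1)) ≤ s ⌊(n : ℝ) * τ2⌋₊ - s ⌊(n : ℝ) * τ1⌋₊ := by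
  set ε := κ * (m - q) / 4
  have hε : 0 < ε := by have := sub_pos.2 hq; positivity
  filter_upwards [eventually_forall_abs_sub_mul_le_of_tendsto_div hs hε,
    tendsto_natCast_atTop_atTop.eventually_ge_atTop (|m| / (2 * ε))]
    with n hn hmn τ1 τ2 hτ1 hτ2 hκτ
  rw [div_le_iff₀ (by positivity)] at hmn
  set a := ⌊(n : ℝ) * τ1⌋₊
  set b := ⌊(n : ℝ) * τ2⌋₊
  have hn0 : (0 : ℝ) ≤ n := n.cast_nonneg
  have hbn : b ≤ n := Nat.floor_le_of_le (by nlinarith)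
  have han : a ≤ n := Nat.floor_le_of_le (by nlinarith)
  have hb := abs_le.1 (hn b hbn)
  have ha := abs_le.1 (hn a han)
  have hfloor : |(b - a : ℝ) - n * (τ2 - τ1)| ≤ 1 := by
    have := Nat.floor_le (a := (n : ℝ) * τ1) (by positivity)
    have := Nat.lt_floor_add_one ((n : ℝ) * τ1)
    have := Nat.floor_le (a := (n : ℝ) * τ2) (by nlinarith)
    have := Nat.lt_floor_add_one ((n : ℝ) * τ2)
    rw [abs_le]; constructor <;> linarith
  have hmfloor : m * (n * (τ2 - τ1)) - |m| ≤ m * (b - a) := by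
    have := abs_le.1 ((abs_mul m _).trans_le (mul_le_of_le_one_right (abs_nonneg m) hfloor))
    linarith [mul_sub m ((b : ℝ) - a) (n * (τ2 - τ1))]
  have hgap : 4 * ε * n ≤ (m - q) * (n * (τ2 - τ1)) := by
    have := sub_pos.2 hq
    calc 4 * ε * n = (m - q) * (n * κ) := by ring
      _ ≤ (m - q) * (n * (τ2 - τ1)) := by gcongr
  linarith

end SublinearErrors

section LowerApproximation

variable {Ω : Type*} [MeasurableSpace Ω] {μ : Measure Ω} {f : Ω → ℝ}

-- `f` need not be measurable, so `∫⁻ f⁺` is approximated from below by a simple function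
-- rather than by the truncations `min f M` used in the paper.
theorem exists_integrable_le_max_zero_of_lt_lintegral [SigmaFinite μ] {r : ℝ}
    (hr : (r : EReal) < (∫⁻ x, ENNReal.ofReal (f x) ∂μ : ℝ≥0∞)) :
    ∃ φ : Ω → ℝ, Measurable φ ∧ Integrable φ μ ∧ (∀ x, φ x ≤ max (f x) 0) ∧
      r < ∫ x, φ x ∂μ := by
  rcases lt_or_ge r 0 with hr0 | hr0
  · exact ⟨0, measurable_const, integrable_zero _ _ _, fun x => le_max_right _ _, by simpa⟩
  have hlt : ENNReal.ofReal r < ∫⁻ x, ((f x).toNNReal : ℝ≥0∞) ∂μ := by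
    rwa [← EReal.coe_ennreal_lt_coe_ennreal_iff, EReal.coe_ennreal_ofReal, max_eq_left hr0]
  obtain ⟨φ, hφf, hφ_fin, hrφ⟩ := exists_lt_lintegral_simpleFunc_of_lt_lintegral hlt
  refine ⟨fun x => (φ x : ℝ), measurable_coe_nnreal_real.comp φ.measurable, ?_,
    fun x => ?_, ?_⟩
  · simpa using integrable_toReal_of_lintegral_ne_top
      (measurable_coe_nnreal_ennreal.comp φ.measurable).aemeasurable hφ_fin.ne
  · rw [← Real.coe_toNNReal']
    exact_mod_cast hφf x
  · have := integral_toReal (μ := μ) (measurable_coe_nnreal_ennreal.comp φ.measurable).aemeasurable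
      (Eventually.of_forall fun x => ENNReal.coe_lt_top)
    simp only [Function.comp_apply, ENNReal.coe_toReal] at this
    rw [this]
    exact (ENNReal.ofReal_lt_iff_lt_toReal hr0 hφ_fin.ne).1 hrφ

theorem exists_measurable_integrable_ae_le_of_lt_mean [SigmaFinite μ]
    (hint : Integrable (fun x => max (-f x) 0) μ) {q : ℝ}
    (hq : (q : EReal) < (∫⁻ x, ENNReal.ofReal (f x) ∂μ : ℝ≥0∞) -
      ((∫ x, max (-f x) 0 ∂μ : ℝ) : EReal)) :
    ∃ g : Ω → ℝ, Measurable g ∧ Integrable g μ ∧ (∀ᵐ x ∂μ, g x ≤ f x) ∧ q < ∫ x, g x ∂μ := by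
  set B := ∫ x, max (-f x) 0 ∂μ
  have hqB : ((q + B : ℝ) : EReal) < (∫⁻ x, ENNReal.ofReal (f x) ∂μ : ℝ≥0∞) := by
    rw [EReal.coe_add]
    exact (EReal.lt_sub_iff_add_lt (.inl (EReal.coe_ne_bot B)) (.inl (EReal.coe_ne_top B))).1 hq
  obtain ⟨φ, hφm, hφ, hφf, hqφ⟩ := exists_integrable_le_max_zero_of_lt_lintegral hqB
  obtain ⟨ψ, hψm, hfψ⟩ := hint.1
  have hψ : Integrable ψ μ := hint.congr hfψ
  refine ⟨fun x => φ x - ψ x, hφm.sub hψm.measurable, hφ.sub hψ, ?_, ?_⟩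
  · filter_upwards [hfψ] with x hx
    rw [← hx]
    linarith [hφf x, max_zero_sub_max_neg_zero_eq_self (f x)]
  · rw [integral_sub hφ hψ, ← integral_congr_ae hfψ]
    linarith

end LowerApproximation

section Windows

variable {Ω : Type*} [MeasurableSpace Ω] {μ : Measure Ω} [IsProbabilityMeasure μ] {T : Ω → Ω}

theorem Ergodic.ae_eventually_mul_le_sum_Ioc {g : Ω → ℝ} (hT : Ergodic T μ)
    (hg : Integrable g μ) (hgm : Measurable g) {q κ : ℝ} (hq : q < ∫ x, g x ∂μ) (hκ : 0 < κ) :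
    ∀ᵐ ω ∂μ, ∀ᶠ n : ℕ in atTop, ∀ τ1 τ2 : ℝ, 0 ≤ τ1 → τ2 ≤ 1 → κ ≤ τ2 - τ1 →
      q * (n * (τ2 - τ1)) ≤ ∑ i ∈ Ioc ⌊(n : ℝ) * τ1⌋₊ ⌊(n : ℝ) * τ2⌋₊, g (T^[i] ω) := by
  filter_upwards [hT.toMeasurePreserving.quasiMeasurePreserving.ae
    (hT.ae_tendsto_birkhoffAverage hg hgm)] with ω hω
  have hs : Tendsto (fun n => birkhoffSum T g n (T ω) / n) atTop (𝓝 (∫ x, g x ∂μ)) := by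
    simpa only [birkhoffAverage, smul_eq_mul, inv_mul_eq_div] using hω
  filter_upwards [eventually_mul_le_sub_floor_of_tendsto_div hs hq hκ] with n hn τ1 τ2 hτ1 hτ2 hκτ
  have hτ : (n : ℝ) * τ1 ≤ n * τ2 := by gcongr; linarith
  rw [sum_Ioc_iterate_eq_birkhoffSum_sub T g (Nat.floor_mono hτ)]
  exact hn τ1 τ2 hτ1 hτ2 hκτ

theorem Ergodic.ae_eventually_le_one_div_mul_sum_Ioc_of_lt_mean {f : Ω → ℝ} (hT : Ergodic T μ)
    (hint : Integrable (fun ω => max (-f ω) 0) μ) {q κ : ℝ} (hκ : 0 < κ)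
    (hq : (q : EReal) < (∫⁻ x, ENNReal.ofReal (f x) ∂μ : ℝ≥0∞) -
      ((∫ x, max (-f x) 0 ∂μ : ℝ) : EReal)) :
    ∀ᵐ ω ∂μ, ∀ᶠ n : ℕ in atTop, ∀ τ1 τ2 : ℝ, 0 ≤ τ1 → τ2 ≤ 1 → κ ≤ τ2 - τ1 →
      q ≤ 1 / (n * (τ2 - τ1)) * ∑ i ∈ Ioc ⌊(n : ℝ) * τ1⌋₊ ⌊(n : ℝ) * τ2⌋₊, f (T^[i] ω) := by
  obtain ⟨g, hgm, hg, hgf, hqg⟩ := exists_measurable_integrable_ae_le_of_lt_mean hint hq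
  have hgf_orbit : ∀ᵐ ω ∂μ, ∀ i : ℕ, g (T^[i] ω) ≤ f (T^[i] ω) :=
    ae_all_iff.2 fun i => (hT.toMeasurePreserving.iterate i).quasiMeasurePreserving.ae hgf
  filter_upwards [hT.ae_eventually_mul_le_sum_Ioc hg hgm hqg hκ, hgf_orbit] with ω hω hωf
  filter_upwards [hω, eventually_gt_atTop 0] with n hn hn0 τ1 τ2 hτ1 hτ2 hκτ
  have hlen : 0 < (n : ℝ) * (τ2 - τ1) := mul_pos (Nat.cast_pos.2 hn0) (hκ.trans_le hκτ)
  rw [one_div_mul_eq_div, le_div_iff₀ hlen]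
  exact (hn τ1 τ2 hτ1 hτ2 hκτ).trans (sum_le_sum fun i _ => hωf i)

end Windows

/-- Uniform-over-windows ergodic lower bound: for a stationary ergodic sequence
W_i = f(T^i ·) with E max(−W_1,0) < ∞ (so E W_1 ∈ ℝ ∪ {+∞}), and windows of relative
length at least κ, lim inf_n inf over windows of the windowed average is ≥ E W_1 a.s.
The mean is the EReal quantity ∫⁻ f⁺ − ∫ f⁻, and "liminf inf ≥ E W₁" is expressed as:
for every real c < E W₁, eventually all windowed averages are ≥ c. -/
theorem stmt12 {Ω : Type*} [MeasurableSpace Ω] (μ : Measure Ω) [IsProbabilityMeasure μ]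
    (T : Ω → Ω) (hT : Ergodic T μ) (f : Ω → ℝ)
    (hint : Integrable (fun ω => max (-f ω) 0) μ)
    (κ : ℝ) (hκ : 0 < κ) :
    ∀ᵐ ω ∂μ, ∀ c : ℝ,
      (c : EReal) < (∫⁻ x, ENNReal.ofReal (f x) ∂μ : ℝ≥0∞) -
        ((∫ x, max (-f x) 0 ∂μ : ℝ) : EReal) →
      ∀ᶠ n : ℕ in atTop, ∀ τ1 τ2 : ℝ, 0 ≤ τ1 → τ2 ≤ 1 → κ ≤ τ2 - τ1 →
        c ≤ (1 / ((n : ℝ) * (τ2 - τ1))) *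
          ∑ i ∈ Finset.Ioc ⌊(n : ℝ) * τ1⌋₊ ⌊(n : ℝ) * τ2⌋₊, f (T^[i] ω) := by
  set mean : EReal := (∫⁻ x, ENNReal.ofReal (f x) ∂μ : ℝ≥0∞) -
    ((∫ x, max (-f x) 0 ∂μ : ℝ) : EReal)
  have hrat := ae_all_iff.2 fun q : {q : ℚ // ((q : ℝ) : EReal) < mean} =>
    hT.ae_eventually_le_one_div_mul_sum_Ioc_of_lt_mean hint hκ q.2
  filter_upwards [hrat] with ω hω c hc
  obtain ⟨q, hcq, hq⟩ := EReal.exists_rat_btwn_of_lt hc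
  filter_upwards [hω ⟨q, hq⟩] with n hn τ1 τ2 hτ1 hτ2 hκτ
  exact (EReal.coe_lt_coe_iff.1 hcq).le.trans (hn τ1 τ2 hτ1 hτ2 hκτ)
end
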